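/- arXiv:1804.08980 — 2 statements merged into one kernel-verified Lean document; each statement's English description precedes it below -/
import Mathlib

section
/- Let (X,𝒳,μ) be a measure space with μ(X) < ∞, (Y,𝒴) a measurable space, ρ : X × Y → [0,∞] a measurable distortion function, and k > 0, m > 0, c > 0, δ₀ ∈ (0,∞). If μ(B_{ρ^{1/k}}(y,δ)) ≤ c δ^m for all y ∈ Y and all δ ∈ (0,δ₀), then for every s > 0 and every y ∈ Y, ∫ e^{−s ρ(x,y)} dμ(x) ≤ c · s^{−m/k} · γ(m/k + 1, s δ₀^k) + μ(X) · e^{−s δ₀^k}. -/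
/-!
Since `e^{-u} = ∫_u^∞ e^{-t} dt`, Tonelli gives
`∫ e^{-sρ(x,y)} dμ(x) = ∫_0^∞ e^{-t} μ{x | sρ(x,y) < t} dt`.
For `t < sδ₀^k` the set `{sρ(·,y) < t}` is the ball of radius `(t/s)^{1/k}`, of measure at most
`c (t/s)^{m/k}`, and `∫_0^{sδ₀^k} e^{-t} c (t/s)^{m/k} dt = c s^{-m/k} γ(m/k + 1, sδ₀^k)`.
For `t ≥ sδ₀^k` the measure is at most `μ(X)`, and
`∫_{sδ₀^k}^∞ e^{-t} dt = e^{-sδ₀^k}`.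
-/

open MeasureTheory Real Set
open scoped ENNReal NNReal

/-- `expNeg u = e^{-u}` for `u ∈ [0,∞]`, with `e^{-∞} = 0`. -/
noncomputable def expNeg (u : ℝ≥0∞) : ℝ≥0∞ :=
  if u = ⊤ then 0 else ENNReal.ofReal (Real.exp (-u.toReal))

/-- The lower incomplete gamma function `γ(a,s) = ∫₀^s t^{a-1} e^{-t} dt`. -/
noncomputable def lowerGamma (a s : ℝ) : ℝ :=
  ∫ t in (0:ℝ)..s, t ^ (a - 1) * Real.exp (-t)

lemma setLIntegral_Ioi_ofReal_exp_neg (a : ℝ) :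
    ∫⁻ t in Ioi a, ENNReal.ofReal (exp (-t)) = ENNReal.ofReal (exp (-a)) := by
  rw [← ofReal_integral_eq_lintegral_ofReal (integrableOn_exp_neg_Ioi a)
    (ae_of_all _ fun t => (exp_pos _).le), integral_exp_neg_Ioi]

lemma expNeg_eq_setLIntegral (u : ℝ≥0∞) :
    expNeg u = ∫⁻ t in Ioi 0,
      if u < ENNReal.ofReal t then ENNReal.ofReal (exp (-t)) else 0 := by
  by_cases hu : u = ⊤
  · simp [expNeg, hu]
  · have h : (fun t : ℝ => if u < ENNReal.ofReal t then ENNReal.ofReal (exp (-t)) else 0)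
        = (Ioi u.toReal).indicator (fun t => ENNReal.ofReal (exp (-t))) := by
      ext t
      simp [indicator_apply, ENNReal.lt_ofReal_iff_toReal_lt hu]
    rw [h, lintegral_indicator measurableSet_Ioi, Measure.restrict_restrict measurableSet_Ioi,
      Ioi_inter_Ioi, max_eq_left ENNReal.toReal_nonneg, setLIntegral_Ioi_ofReal_exp_neg]
    simp [expNeg, hu]

theorem lintegral_expNeg_eq_lintegral_meas_lt {X : Type*} [MeasurableSpace X]
    (μ : Measure X) [SFinite μ] {f : X → ℝ≥0∞} (hf : Measurable f) :
    ∫⁻ x, expNeg (f x) ∂μ =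
      ∫⁻ t in Ioi 0, ENNReal.ofReal (exp (-t)) * μ {x | f x < ENNReal.ofReal t} := by
  simp_rw [expNeg_eq_setLIntegral]
  rw [lintegral_lintegral_swap]
  · refine lintegral_congr fun t => ?_
    rw [← lintegral_indicator_const (measurableSet_lt hf measurable_const)]
    simp [indicator_apply]
  · refine Measurable.aemeasurable (Measurable.ite ?_ (by fun_prop) measurable_const)
    exact measurableSet_lt (hf.comp measurable_fst) (ENNReal.measurable_ofReal.comp measurable_snd)

lemma ENNReal.ofReal_mul_lt_ofReal_iff {s t : ℝ} (hs : 0 < s) {a : ℝ≥0∞} :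
    ENNReal.ofReal s * a < ENNReal.ofReal t ↔ a < ENNReal.ofReal (t / s) := by
  rw [← mul_div_cancel₀ t hs.ne', ENNReal.ofReal_mul hs.le, mul_div_cancel₀ t hs.ne']
  exact ENNReal.mul_lt_mul_iff_right (by simpa using hs) ENNReal.ofReal_ne_top

lemma measure_lt_ofReal_le_of_measure_ball_le {X : Type*} [MeasurableSpace X] {μ : Measure X}
    {g : X → ℝ≥0∞} {k m c δ₀ : ℝ} (hk : 0 < k) (hδ₀ : 0 < δ₀)
    (hball : ∀ δ : ℝ, 0 < δ → δ < δ₀ →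
      μ {x | g x < ENNReal.ofReal (δ ^ k)} ≤ ENNReal.ofReal (c * δ ^ m))
    {r : ℝ} (hr : 0 < r) (hrδ₀ : r < δ₀ ^ k) :
    μ {x | g x < ENNReal.ofReal r} ≤ ENNReal.ofReal (c * r ^ (m / k)) := by
  have hδ : 0 < r ^ k⁻¹ := rpow_pos_of_pos hr _
  have hδδ₀ : r ^ k⁻¹ < δ₀ := by
    simpa [← rpow_mul hδ₀.le, hk.ne'] using rpow_lt_rpow hr.le hrδ₀ (inv_pos.mpr hk)
  simpa [← rpow_mul hr.le, hk.ne', div_eq_inv_mul] using hball _ hδ hδδ₀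

lemma lowerGamma_nonneg (a : ℝ) {T : ℝ} (hT : 0 ≤ T) : 0 ≤ lowerGamma a T :=
  intervalIntegral.integral_nonneg hT fun t ht => by have := ht.1; positivity

lemma setLIntegral_Ioo_rpow_mul_exp_neg_eq_lowerGamma {a T : ℝ} (ha : 0 < a) (hT : 0 ≤ T) :
    ∫⁻ t in Ioo 0 T, ENNReal.ofReal (t ^ (a - 1) * exp (-t)) =
      ENNReal.ofReal (lowerGamma a T) := by
  have hint : IntegrableOn (fun t => t ^ (a - 1) * exp (-t)) (Ioo 0 T) := by
    simpa only [mul_comm] using (GammaIntegral_convergent ha).mono_set Ioo_subset_Ioi_self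
  rw [lowerGamma, intervalIntegral.integral_of_le hT, integral_Ioc_eq_integral_Ioo,
    ofReal_integral_eq_lintegral_ofReal hint]
  exact ae_restrict_of_forall_mem measurableSet_Ioo fun t ht => by have := ht.1; positivity

lemma setLIntegral_Ioo_exp_neg_mul_le_lowerGamma {F : ℝ → ℝ≥0∞} {a c s T : ℝ}
    (ha : -1 < a) (hc : 0 ≤ c) (hs : 0 < s) (hT : 0 ≤ T)
    (hF : ∀ t ∈ Ioo 0 T, F t ≤ ENNReal.ofReal (c * (t / s) ^ a)) :
    ∫⁻ t in Ioo 0 T, ENNReal.ofReal (exp (-t)) * F t ≤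
      ENNReal.ofReal (c * s ^ (-a) * lowerGamma (a + 1) T) := by
  calc ∫⁻ t in Ioo 0 T, ENNReal.ofReal (exp (-t)) * F t
      ≤ ∫⁻ t in Ioo 0 T, ENNReal.ofReal (c * s ^ (-a)) *
          ENNReal.ofReal (t ^ (a + 1 - 1) * exp (-t)) := by
        refine setLIntegral_mono' measurableSet_Ioo fun t ht => ?_
        have ht0 := ht.1
        calc ENNReal.ofReal (exp (-t)) * F t
            ≤ ENNReal.ofReal (exp (-t)) * ENNReal.ofReal (c * (t / s) ^ a) := by
              gcongr; exact hF t ht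
          _ = _ := by
              rw [← ENNReal.ofReal_mul (exp_pos _).le, ← ENNReal.ofReal_mul (by positivity),
                div_rpow ht0.le hs.le, rpow_neg hs.le, add_sub_cancel_right]
              ring_nf
    _ = ENNReal.ofReal (c * s ^ (-a) * lowerGamma (a + 1) T) := by
        rw [lintegral_const_mul' _ _ ENNReal.ofReal_ne_top,
          setLIntegral_Ioo_rpow_mul_exp_neg_eq_lowerGamma (by linarith) hT,
          ← ENNReal.ofReal_mul (by positivity)]

/-- If `μ(X) < ∞` and `μ(B_{ρ^{1/k}}(y,δ)) ≤ c δ^m` for all `y` and all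
`δ ∈ (0,δ₀)`, then for all `s > 0` and `y`,
`∫ e^{-s ρ(x,y)} dμ(x) ≤ c s^{-m/k} γ(m/k + 1, s δ₀^k) + μ(X) e^{-s δ₀^k}`. -/
theorem stmt3
    {X Y : Type*} [MeasurableSpace X] [MeasurableSpace Y]
    (μ : Measure X) (hμfin : μ Set.univ < ⊤)
    (ρ : X → Y → ℝ≥0∞) (hρ : Measurable (fun p : X × Y => ρ p.1 p.2))
    (k m : ℝ) (hk : 0 < k) (hm : 0 < m) (c δ₀ : ℝ) (hc : 0 < c) (hδ₀ : 0 < δ₀)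
    (hsub : ∀ y : Y, ∀ δ : ℝ, 0 < δ → δ < δ₀ →
      μ {x | ρ x y < ENNReal.ofReal (δ ^ k)} ≤ ENNReal.ofReal (c * δ ^ m)) :
    ∀ s : ℝ, 0 < s → ∀ y : Y,
      ∫⁻ x, expNeg (ENNReal.ofReal s * ρ x y) ∂μ ≤
        ENNReal.ofReal (c * s ^ (-(m / k)) * lowerGamma (m / k + 1) (s * δ₀ ^ k)
          + (μ Set.univ).toReal * Real.exp (-(s * δ₀ ^ k))) := by
  intro s hs y
  have : IsFiniteMeasure μ := ⟨hμfin⟩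
  have hT : 0 < s * δ₀ ^ k := by positivity
  have hρy : Measurable fun x => ρ x y := hρ.comp (measurable_id.prodMk measurable_const)
  rw [lintegral_expNeg_eq_lintegral_meas_lt μ (hρy.const_mul _), ← Ioo_union_Ici_eq_Ioi hT,
    lintegral_union measurableSet_Ici ((Iio_disjoint_Ici le_rfl).mono_left Ioo_subset_Iio_self),
    ENNReal.ofReal_add (by have := lowerGamma_nonneg (m / k + 1) hT.le; positivity)
      (by positivity), ENNReal.ofReal_mul ENNReal.toReal_nonneg,
    ENNReal.ofReal_toReal hμfin.ne]
  refine add_le_add ?_ ?_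
  · refine setLIntegral_Ioo_exp_neg_mul_le_lowerGamma (by linarith [div_pos hm hk]) hc.le hs
      hT.le fun t ht => ?_
    simp_rw [ENNReal.ofReal_mul_lt_ofReal_iff hs]
    exact measure_lt_ofReal_le_of_measure_ball_le hk hδ₀ (hsub y) (div_pos ht.1 hs)
      ((div_lt_iff₀ hs).mpr (by linarith [ht.2]))
  · calc _ ≤ ∫⁻ t in Ici (s * δ₀ ^ k), ENNReal.ofReal (exp (-t)) * μ univ := by
          gcongr
          exact subset_univ _
      _ = _ := by
          rw [lintegral_mul_const' _ _ hμfin.ne, ← setLIntegral_congr Ioi_ae_eq_Ici,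
            setLIntegral_Ioi_ofReal_exp_neg, mul_comm]
end

section
/- Let X be a random variable with distribution μ_X on a measure space (X,𝒳,μ), where μ(X) < ∞, μ_X ≪ μ, and the generalized entropy h_μ(X) := −∫ log(dμ_X/dμ) dμ_X is finite. Let (Y,𝒴) be a measurable space, ρ : X × Y → [0,∞] a measurable distortion function, and k > 0, m > 0, δ₀ ∈ (0,∞), c > 0 with c < μ(X) δ₀^{−m}. Suppose μ(B_{ρ^{1/k}}(y,δ)) ≤ c δ^m for all y ∈ Y and all δ ∈ (0,δ₀). Then for every D > 0, h_μ(X) − inf_{s ≥ 0} ( s·D + log ν(s) ) ≥ h_μ(X) − inf_{s > 0} q(s,D), where ν(s) := sup_{y∈Y} ∫ e^{−s ρ(x,y)} dμ(x), q(s,D) := s δ₀^{−k} D + p(s), and p(s) := log( ( μ(X) Γ(m/k+1) − (μ(X) − δ₀^m c) γ(m/k+1, s) ) / s^{m/k} ). -/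
open MeasureTheory Real Set
open scoped ENNReal NNReal

lemma lintegral_Ioi_ofReal_exp_neg (b : ℝ) :
    ∫⁻ u in Ioi b, ENNReal.ofReal (exp (-u)) = ENNReal.ofReal (exp (-b)) := by
  rw [← ofReal_integral_eq_lintegral_ofReal (integrableOn_exp_neg_Ioi b)
    (ae_of_all _ fun u => (exp_pos _).le), integral_exp_neg_Ioi]

lemma expNeg_eq_lintegral (r : ℝ≥0∞) :
    expNeg r
      = ∫⁻ u in Ioi (0 : ℝ), if r < ENNReal.ofReal u then ENNReal.ofReal (exp (-u)) else 0 := by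
  by_cases hr : r = ⊤
  · simp [hr, expNeg, not_top_lt]
  have hset : (fun u : ℝ => if r < ENNReal.ofReal u then ENNReal.ofReal (exp (-u)) else 0)
      = (Ioi r.toReal).indicator fun u => ENNReal.ofReal (exp (-u)) := by
    ext u
    simp [indicator_apply, ENNReal.lt_ofReal_iff_toReal_lt hr]
  rw [hset, lintegral_indicator measurableSet_Ioi, Measure.restrict_restrict measurableSet_Ioi,
    Ioi_inter_Ioi, max_eq_left ENNReal.toReal_nonneg, lintegral_Ioi_ofReal_exp_neg, expNeg,
    if_neg hr]

lemma ENNReal.log_ofReal_le (x : ℝ) : ENNReal.log (ENNReal.ofReal x) ≤ Real.log x := by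
  rw [ENNReal.log_ofReal]
  split_ifs <;> simp

lemma lowerGamma_add_one (a s : ℝ) :
    lowerGamma (a + 1) s = ∫ t in (0 : ℝ)..s, t ^ a * exp (-t) := by
  rw [lowerGamma, add_sub_cancel_right]

lemma lowerGamma_nonneg_s7 (a : ℝ) {s : ℝ} (hs : 0 ≤ s) : 0 ≤ lowerGamma a s :=
  intervalIntegral.integral_nonneg hs fun _ ht => mul_nonneg (rpow_nonneg ht.1 _) (exp_pos _).le

lemma lintegral_Ioo_ofReal_mul_rpow_mul_exp_neg {a : ℝ} (ha : 0 ≤ a) {c : ℝ} (hc : 0 ≤ c)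
    {S : ℝ} (hS : 0 ≤ S) :
    ∫⁻ u in Ioo 0 S, ENNReal.ofReal (c * u ^ a) * ENNReal.ofReal (exp (-u))
      = ENNReal.ofReal (c * lowerGamma (a + 1) S) := by
  have hcont : Continuous fun u : ℝ => c * u ^ a * exp (-u) := by
    have := continuous_rpow_const ha
    fun_prop
  rw [setLIntegral_congr_fun measurableSet_Ioo fun u hu =>
      (ENNReal.ofReal_mul (mul_nonneg hc (rpow_nonneg hu.1.le a))).symm,
    ← ofReal_integral_eq_lintegral_ofReal (hcont.integrableOn_Icc.mono_set Ioo_subset_Icc_self)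
      ((ae_restrict_iff' measurableSet_Ioo).2 (ae_of_all _ fun u hu =>
        mul_nonneg (mul_nonneg hc (rpow_nonneg hu.1.le a)) (exp_pos _).le)),
    ← integral_Ioc_eq_integral_Ioo, ← intervalIntegral.integral_of_le hS, lowerGamma_add_one,
    ← intervalIntegral.integral_const_mul]
  simp only [mul_assoc]

lemma rpow_mul_exp_neg_add_lowerGamma_le_Gamma {a s : ℝ} (ha : 0 ≤ a) (hs : 0 ≤ s) :
    s ^ a * exp (-s) + lowerGamma (a + 1) s ≤ Gamma (a + 1) := by
  have hint : IntegrableOn (fun x => exp (-x) * x ^ a) (Ioi 0) := by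
    simpa using GammaIntegral_convergent (s := a + 1) (by linarith)
  have htail : s ^ a * exp (-s) ≤ ∫ x in Ioi s, exp (-x) * x ^ a := calc
    s ^ a * exp (-s) = ∫ x in Ioi s, exp (-x) * s ^ a := by
        rw [integral_mul_const, integral_exp_neg_Ioi, mul_comm]
    _ ≤ _ := setIntegral_mono_on ((integrableOn_exp_neg_Ioi s).mul_const _)
        (hint.mono_set (Ioi_subset_Ioi hs)) measurableSet_Ioi fun x hx => by
          gcongr; exact le_of_lt hx
  have hlower : lowerGamma (a + 1) s = ∫ x in (0 : ℝ)..s, exp (-x) * x ^ a := by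
    simp_rw [lowerGamma_add_one, mul_comm]
  rw [Gamma_eq_integral (by linarith), add_sub_cancel_right, hlower,
    ← intervalIntegral.integral_interval_add_Ioi hint (hint.mono_set (Ioi_subset_Ioi hs))]
  linarith

section

variable {X : Type*} [MeasurableSpace X] (μ : Measure X)

lemma lintegral_expNeg_eq_lintegral_measure_lt [SFinite μ] {g : X → ℝ≥0∞} (hg : Measurable g) :
    ∫⁻ x, expNeg (g x) ∂μ
      = ∫⁻ u in Ioi (0 : ℝ), μ {x | g x < ENNReal.ofReal u} * ENNReal.ofReal (exp (-u)) := by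
  simp_rw [expNeg_eq_lintegral]
  rw [lintegral_lintegral_swap]
  · refine lintegral_congr fun u => ?_
    rw [mul_comm, ← lintegral_indicator_const (measurableSet_lt hg measurable_const)]
    simp only [indicator_apply, mem_ofPred_eq]
  · exact (Measurable.ite (measurableSet_lt (hg.comp measurable_fst)
      (ENNReal.measurable_ofReal.comp measurable_snd))
      (by fun_prop) measurable_const).aemeasurable

lemma lintegral_expNeg_le_of_measure_lt_le [IsFiniteMeasure μ] {g : X → ℝ≥0∞} (hg : Measurable g)
    {a c S : ℝ} (ha : 0 ≤ a) (hc : 0 ≤ c) (hS : 0 < S)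
    (hlt : ∀ u, 0 < u → u < S → μ {x | g x < ENNReal.ofReal u} ≤ ENNReal.ofReal (c * u ^ a)) :
    ∫⁻ x, expNeg (g x) ∂μ
      ≤ ENNReal.ofReal (c * lowerGamma (a + 1) S + (μ univ).toReal * exp (-S)) := by
  have hdisj : Disjoint (Ioo (0 : ℝ) S) (Ici S) :=
    disjoint_left.2 fun u hu hu' => (not_le.2 hu.2) hu'
  rw [lintegral_expNeg_eq_lintegral_measure_lt μ hg, ← Ioo_union_Ici_eq_Ioi hS,
    lintegral_union measurableSet_Ici hdisj]
  have hbelow : ∫⁻ u in Ioo 0 S, μ {x | g x < ENNReal.ofReal u} * ENNReal.ofReal (exp (-u))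
      ≤ ENNReal.ofReal (c * lowerGamma (a + 1) S) := by
    rw [← lintegral_Ioo_ofReal_mul_rpow_mul_exp_neg ha hc hS.le]
    exact setLIntegral_mono' measurableSet_Ioo fun u hu => by gcongr; exact hlt u hu.1 hu.2
  have habove : ∫⁻ u in Ici S, μ {x | g x < ENNReal.ofReal u} * ENNReal.ofReal (exp (-u))
      ≤ ENNReal.ofReal ((μ univ).toReal * exp (-S)) := by
    calc _ ≤ ∫⁻ u in Ici S, μ univ * ENNReal.ofReal (exp (-u)) :=
          lintegral_mono fun u => by gcongr; exact subset_univ _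
      _ = ENNReal.ofReal ((μ univ).toReal * exp (-S)) := by
        rw [lintegral_const_mul _ (by fun_prop), ← Measure.restrict_congr_set Ioi_ae_eq_Ici,
          lintegral_Ioi_ofReal_exp_neg, ENNReal.ofReal_mul ENNReal.toReal_nonneg,
          ENNReal.ofReal_toReal (measure_ne_top μ univ)]
  refine (add_le_add hbelow habove).trans_eq ?_
  exact (ENNReal.ofReal_add (mul_nonneg hc (lowerGamma_nonneg_s7 _ hS.le)) (by positivity)).symm

lemma measure_ofReal_mul_lt_le_of_measure_ball_le {f : X → ℝ≥0∞} {k m δ₀ c s u : ℝ} (hk : 0 < k)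
    (hδ₀ : 0 < δ₀) (hu : 0 < u) (hus : u < s)
    (hball : ∀ δ, 0 < δ → δ < δ₀ →
      μ {x | f x < ENNReal.ofReal (δ ^ k)} ≤ ENNReal.ofReal (c * δ ^ m)) :
    μ {x | ENNReal.ofReal (s * δ₀ ^ (-k)) * f x < ENNReal.ofReal u}
      ≤ ENNReal.ofReal (c * δ₀ ^ m / s ^ (m / k) * u ^ (m / k)) := by
  have hs : 0 < s := hu.trans hus
  have hus' : 0 < u / s := div_pos hu hs
  set δ := δ₀ * (u / s) ^ k⁻¹
  have hδ : 0 < δ := by positivity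
  have hδlt : δ < δ₀ :=
    mul_lt_of_lt_one_right hδ₀ (rpow_lt_one hus'.le ((div_lt_one hs).2 hus) (inv_pos.2 hk))
  have hδk : δ ^ k = u / (s * δ₀ ^ (-k)) := by
    rw [mul_rpow hδ₀.le (by positivity), ← rpow_mul hus'.le, inv_mul_cancel₀ hk.ne', rpow_one,
      rpow_neg hδ₀.le]
    field_simp
  have hδm : δ ^ m = δ₀ ^ m / s ^ (m / k) * u ^ (m / k) := by
    rw [mul_rpow hδ₀.le (by positivity), ← rpow_mul hus'.le, div_rpow hu.le hs.le,
      inv_mul_eq_div]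
    ring
  have hset : {x | ENNReal.ofReal (s * δ₀ ^ (-k)) * f x < ENNReal.ofReal u}
      = {x | f x < ENNReal.ofReal (δ ^ k)} := by
    ext x
    have hA : 0 < s * δ₀ ^ (-k) := by positivity
    rw [hδk, ENNReal.ofReal_div_of_pos hA, mem_ofPred_eq, mem_ofPred_eq,
      ENNReal.lt_div_iff_mul_lt (Or.inl (ENNReal.ofReal_pos.2 hA).ne')
        (Or.inl ENNReal.ofReal_ne_top), mul_comm]
  rw [hset]
  convert hball δ hδ hδlt using 2
  rw [hδm]
  ring

lemma lintegral_expNeg_le_of_measure_ball_le [IsFiniteMeasure μ] {f : X → ℝ≥0∞} (hf : Measurable f)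
    {k m δ₀ c s : ℝ} (hk : 0 < k) (hm : 0 ≤ m) (hδ₀ : 0 < δ₀) (hc : 0 ≤ c) (hs : 0 < s)
    (hball : ∀ δ, 0 < δ → δ < δ₀ →
      μ {x | f x < ENNReal.ofReal (δ ^ k)} ≤ ENNReal.ofReal (c * δ ^ m)) :
    ∫⁻ x, expNeg (ENNReal.ofReal (s * δ₀ ^ (-k)) * f x) ∂μ
      ≤ ENNReal.ofReal (((μ univ).toReal * Gamma (m / k + 1)
          - ((μ univ).toReal - δ₀ ^ m * c) * lowerGamma (m / k + 1) s) / s ^ (m / k)) := by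
  have ha : 0 ≤ m / k := div_nonneg hm hk.le
  refine (lintegral_expNeg_le_of_measure_lt_le μ (by fun_prop) ha
    (by positivity : 0 ≤ c * δ₀ ^ m / s ^ (m / k)) hs fun u hu hus =>
      measure_ofReal_mul_lt_le_of_measure_ball_le μ hk hδ₀ hu hus hball).trans
    (ENNReal.ofReal_le_ofReal ?_)
  have hsa : 0 < s ^ (m / k) := rpow_pos_of_pos hs _
  have htail := rpow_mul_exp_neg_add_lowerGamma_le_Gamma ha hs.le
  have hM : 0 ≤ (μ univ).toReal := ENNReal.toReal_nonneg
  rw [le_div_iff₀ hsa]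
  have hexpand :
      (c * δ₀ ^ m / s ^ (m / k) * lowerGamma (m / k + 1) s + (μ univ).toReal * exp (-s))
        * s ^ (m / k)
      = c * δ₀ ^ m * lowerGamma (m / k + 1) s + (μ univ).toReal * (s ^ (m / k) * exp (-s)) := by
    field_simp
  nlinarith [mul_le_mul_of_nonneg_left htail hM]

end

theorem stmt7_general
    {X Y : Type*} [MeasurableSpace X] [MeasurableSpace Y]
    (μ : Measure X) (hμfin : μ Set.univ < ⊤)
    (h : ℝ)
    (ρ : X → Y → ℝ≥0∞) (hρ : Measurable (fun p : X × Y => ρ p.1 p.2))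
    (k m δ₀ c : ℝ) (hk : 0 < k) (hm : 0 < m) (hδ₀ : 0 < δ₀) (hc : 0 < c)
    (hsub : ∀ y : Y, ∀ δ : ℝ, 0 < δ → δ < δ₀ →
      μ {x | ρ x y < ENNReal.ofReal (δ ^ k)} ≤ ENNReal.ofReal (c * δ ^ m))
    (ν : ℝ → ℝ≥0∞)
    (hν : ∀ s : ℝ, ν s = ⨆ y : Y, ∫⁻ x, expNeg (ENNReal.ofReal s * ρ x y) ∂μ)
    (p : ℝ → ℝ)
    (hp : ∀ s : ℝ, p s =
      Real.log (((μ Set.univ).toReal * Real.Gamma (m / k + 1)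
        - ((μ Set.univ).toReal - δ₀ ^ m * c) * lowerGamma (m / k + 1) s) / s ^ (m / k))) :
    ∀ D : ℝ, 0 < D →
      (h : EReal) - ⨅ s : {s : ℝ // 0 ≤ s}, (((s : ℝ) * D : ℝ) : EReal) + ENNReal.log (ν s) ≥
        (h : EReal) - ⨅ s : {s : ℝ // 0 < s}, (((s : ℝ) * δ₀ ^ (-k) * D + p s : ℝ) : EReal) := by
  intro D _
  have : IsFiniteMeasure μ := ⟨hμfin⟩
  refine EReal.sub_le_sub le_rfl (le_iInf fun ⟨s, hs⟩ => ?_)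
  refine iInf_le_of_le ⟨s * δ₀ ^ (-k), by positivity⟩ ?_
  rw [EReal.coe_add, hp s]
  gcongr
  refine (ENNReal.log_monotone ?_).trans (ENNReal.log_ofReal_le _)
  rw [hν]
  exact iSup_le fun y => lintegral_expNeg_le_of_measure_ball_le μ (f := fun x => ρ x y)
    (hρ.comp (measurable_id.prodMk measurable_const)) hk hm.le hδ₀ hc.le hs (hsub y)

/-- In the regime `c < μ(X) δ₀^{-m}`, the Shannon lower bound
`h − inf_{s ≥ 0}(sD + log ν(s))` is bounded below by `h − inf_{s > 0} q(s,D)`, where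
`q(s,D) = s δ₀^{-k} D + p(s)` and
`p(s) = log((μ(X) Γ(m/k+1) − (μ(X) − δ₀^m c) γ(m/k+1,s)) / s^{m/k})`. -/
theorem stmt7
    {X Y : Type*} [MeasurableSpace X] [MeasurableSpace Y]
    (μ : Measure X) (hμfin : μ Set.univ < ⊤)
    (μX : Measure X) [IsProbabilityMeasure μX] (hac : μX ≪ μ)
    (h : ℝ)
    (hint : Integrable (fun x => Real.log (μX.rnDeriv μ x).toReal) μX)
    (hh : h = -∫ x, Real.log (μX.rnDeriv μ x).toReal ∂μX)
    (ρ : X → Y → ℝ≥0∞) (hρ : Measurable (fun p : X × Y => ρ p.1 p.2))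
    (k m δ₀ c : ℝ) (hk : 0 < k) (hm : 0 < m) (hδ₀ : 0 < δ₀) (hc : 0 < c)
    (hcsmall : c < (μ Set.univ).toReal * δ₀ ^ (-m))
    (hsub : ∀ y : Y, ∀ δ : ℝ, 0 < δ → δ < δ₀ →
      μ {x | ρ x y < ENNReal.ofReal (δ ^ k)} ≤ ENNReal.ofReal (c * δ ^ m))
    (ν : ℝ → ℝ≥0∞)
    (hν : ∀ s : ℝ, ν s = ⨆ y : Y, ∫⁻ x, expNeg (ENNReal.ofReal s * ρ x y) ∂μ)
    (p : ℝ → ℝ)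
    (hp : ∀ s : ℝ, p s =
      Real.log (((μ Set.univ).toReal * Real.Gamma (m / k + 1)
        - ((μ Set.univ).toReal - δ₀ ^ m * c) * lowerGamma (m / k + 1) s) / s ^ (m / k))) :
    ∀ D : ℝ, 0 < D →
      (h : EReal) - ⨅ s : {s : ℝ // 0 ≤ s}, (((s : ℝ) * D : ℝ) : EReal) + ENNReal.log (ν s) ≥
        (h : EReal) - ⨅ s : {s : ℝ // 0 < s}, (((s : ℝ) * δ₀ ^ (-k) * D + p s : ℝ) : EReal) :=
  stmt7_general μ hμfin h ρ hρ k m δ₀ c hk hm hδ₀ hc hsub ν hν p hp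
end
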